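/- arXiv:1810.00754 — 6 statements merged into one kernel-verified Lean document; each statement's English description precedes it below -/
import Mathlib

section
/- Assume λ < 2aā and set ε = 2aā − λ > 0. Then for every state (Q₁,Q₂) ∈ ℕ×ℕ, the one-step expected drift of the quadratic Lyapunov function V(i,j) = i² + j² under the original chain satisfies Σ_{(i,j)∈ℕ×ℕ} P((Q₁,Q₂),(i,j))·(i² + j²) − (Q₁² + Q₂²) ≤ 2 − ε(Q₁ + Q₂). -/
/-- One-step transition probabilities of the original chain. -/
noncomputable def Pker (a lam : ℝ) : ℕ × ℕ → ℕ × ℕ → ℝ := fun s t =>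
  let i := s.1; let j := s.2
  if j < i ∧ 0 < j then
    (if t = (i, j+1) then lam*((1-a)^2+a^2) else 0)
    + (if t = (i, j-1) then (1-lam)*a*(1-a) else 0)
    + (if t = (i-1, j) then (1-lam)*a*(1-a) else 0)
    + (if t = (i-1, j+1) then lam*a*(1-a) else 0)
    + (if t = (i, j) then (1-lam)*((1-a)^2+a^2) + lam*a*(1-a) else 0)
  else if i < j ∧ 0 < i then
    (if t = (i+1, j) then lam*((1-a)^2+a^2) else 0)
    + (if t = (i, j-1) then (1-lam)*a*(1-a) else 0)
    + (if t = (i-1, j) then (1-lam)*a*(1-a) else 0)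
    + (if t = (i+1, j-1) then lam*a*(1-a) else 0)
    + (if t = (i, j) then (1-lam)*((1-a)^2+a^2) + lam*a*(1-a) else 0)
  else if 0 < i ∧ j = 0 then
    (if t = (i, 1) then lam*((1-a)^2+a^2) else 0)
    + (if t = (i-1, 0) then (1-lam)*a else 0)
    + (if t = (i-1, 1) then lam*a*(1-a) else 0)
    + (if t = (i, 0) then (1-lam)*(1-a) + lam*a*(1-a) else 0)
  else if 0 < j ∧ i = 0 then
    (if t = (1, j) then lam*((1-a)^2+a^2) else 0)
    + (if t = (0, j-1) then (1-lam)*a else 0)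
    + (if t = (1, j-1) then lam*a*(1-a) else 0)
    + (if t = (0, j) then (1-lam)*(1-a) + lam*a*(1-a) else 0)
  else if 0 < i then
    (if t = (i+1, i) then lam/2*((1-a)^2+a^2) else 0)
    + (if t = (i, i+1) then lam/2*((1-a)^2+a^2) else 0)
    + (if t = (i-1, i) then (1-lam)*(1-a)*a else 0)
    + (if t = (i, i-1) then (1-lam)*(1-a)*a else 0)
    + (if t = (i+1, i-1) then lam/2*(1-a)*a else 0)
    + (if t = (i-1, i+1) then lam/2*(1-a)*a else 0)
    + (if t = (i, i) then (1-lam)*((1-a)^2+a^2) + lam*a*(1-a) else 0)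
  else
    (if t = (1, 0) then lam/2*(1-a) else 0)
    + (if t = (0, 1) then lam/2*(1-a) else 0)
    + (if t = (0, 0) then (1-lam) + lam*a else 0)


lemma sInd (c : ℕ×ℕ) (v : ℝ) (f : ℕ×ℕ → ℝ) :
    Summable (fun t : ℕ×ℕ => (if t = c then v else 0) * f t) := by
  apply summable_of_ne_finset_zero (s := {c})
  intro t ht
  simp only [Finset.mem_singleton] at ht
  simp [ht]

lemma tInd (c : ℕ×ℕ) (v : ℝ) (f : ℕ×ℕ → ℝ) :
    ∑' t : ℕ×ℕ, (if t = c then v else 0) * f t = v * f c := by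
  rw [tsum_eq_single c]
  · simp
  · intro t ht; simp [ht]

lemma tsum3 (c1 c2 c3 : ℕ×ℕ) (v1 v2 v3 : ℝ) (f : ℕ×ℕ → ℝ) :
    ∑' t : ℕ×ℕ, ((if t = c1 then v1 else 0) * f t + (if t = c2 then v2 else 0) * f t
      + (if t = c3 then v3 else 0) * f t)
    = v1 * f c1 + v2 * f c2 + v3 * f c3 := by
  rw [Summable.tsum_add ((sInd c1 v1 f).add (sInd c2 v2 f)) (sInd c3 v3 f),
      Summable.tsum_add (sInd c1 v1 f) (sInd c2 v2 f), tInd, tInd, tInd]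

lemma tsum4 (c1 c2 c3 c4 : ℕ×ℕ) (v1 v2 v3 v4 : ℝ) (f : ℕ×ℕ → ℝ) :
    ∑' t : ℕ×ℕ, ((if t = c1 then v1 else 0) * f t + (if t = c2 then v2 else 0) * f t
      + (if t = c3 then v3 else 0) * f t + (if t = c4 then v4 else 0) * f t)
    = v1 * f c1 + v2 * f c2 + v3 * f c3 + v4 * f c4 := by
  rw [Summable.tsum_add (((sInd c1 v1 f).add (sInd c2 v2 f)).add (sInd c3 v3 f)) (sInd c4 v4 f),
      tsum3, tInd]

lemma tsum5 (c1 c2 c3 c4 c5 : ℕ×ℕ) (v1 v2 v3 v4 v5 : ℝ) (f : ℕ×ℕ → ℝ) :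
    ∑' t : ℕ×ℕ, ((if t = c1 then v1 else 0) * f t + (if t = c2 then v2 else 0) * f t
      + (if t = c3 then v3 else 0) * f t + (if t = c4 then v4 else 0) * f t
      + (if t = c5 then v5 else 0) * f t)
    = v1 * f c1 + v2 * f c2 + v3 * f c3 + v4 * f c4 + v5 * f c5 := by
  rw [Summable.tsum_add ((((sInd c1 v1 f).add (sInd c2 v2 f)).add (sInd c3 v3 f)).add (sInd c4 v4 f))
      (sInd c5 v5 f), tsum4, tInd]

lemma tsum7 (c1 c2 c3 c4 c5 c6 c7 : ℕ×ℕ) (v1 v2 v3 v4 v5 v6 v7 : ℝ) (f : ℕ×ℕ → ℝ) :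
    ∑' t : ℕ×ℕ, ((if t = c1 then v1 else 0) * f t + (if t = c2 then v2 else 0) * f t
      + (if t = c3 then v3 else 0) * f t + (if t = c4 then v4 else 0) * f t
      + (if t = c5 then v5 else 0) * f t + (if t = c6 then v6 else 0) * f t
      + (if t = c7 then v7 else 0) * f t)
    = v1 * f c1 + v2 * f c2 + v3 * f c3 + v4 * f c4 + v5 * f c5 + v6 * f c6 + v7 * f c7 := by
  rw [Summable.tsum_add ((((((sInd c1 v1 f).add (sInd c2 v2 f)).add (sInd c3 v3 f)).add (sInd c4 v4 f)).add
      (sInd c5 v5 f)).add (sInd c6 v6 f)) (sInd c7 v7 f),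
      Summable.tsum_add (((((sInd c1 v1 f).add (sInd c2 v2 f)).add (sInd c3 v3 f)).add (sInd c4 v4 f)).add
      (sInd c5 v5 f)) (sInd c6 v6 f), tsum5, tInd, tInd]

set_option maxHeartbeats 1000000 in
/-- drift bound of the quadratic Lyapunov function V(i,j)=i²+j². -/
theorem stmt1 (a lam : ℝ) (ha : 0 < a) (ha1 : a < 1) (hl : 0 < lam) (hl1 : lam < 1)
    (hstab : lam < 2*a*(1-a)) :
    ∀ Q1 Q2 : ℕ,
      (∑' t : ℕ × ℕ, Pker a lam (Q1, Q2) t * (((t.1 : ℝ))^2 + ((t.2 : ℝ))^2))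
        - (((Q1 : ℝ))^2 + ((Q2 : ℝ))^2)
      ≤ 2 - (2*a*(1-a) - lam) * ((Q1 : ℝ) + (Q2 : ℝ)) := by
  intro Q1 Q2
  have haa : (0:ℝ) ≤ 1 - 4*a*(1-a) := by nlinarith [sq_nonneg (2*a-1)]
  have hC : (1-lam)*(1 - 4*a*(1-a)) ≥ 0 := mul_nonneg (by linarith) haa
  by_cases h1 : Q2 < Q1 ∧ 0 < Q2
  · -- case i > j > 0
    have e1 : ((Q1-1:ℕ):ℝ) = (Q1:ℝ)-1 := by
      rw [Nat.cast_sub (by omega)]; norm_num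
    have hsum : (∑' t : ℕ × ℕ, Pker a lam (Q1, Q2) t * (((t.1 : ℝ))^2 + ((t.2 : ℝ))^2))
        = lam*((1-a)^2+a^2) * ((Q1:ℝ)^2+((Q2:ℝ)+1)^2)
        + (1-lam)*a*(1-a) * ((Q1:ℝ)^2+((Q2:ℝ)-1)^2)
        + (1-lam)*a*(1-a) * (((Q1:ℝ)-1)^2+(Q2:ℝ)^2)
        + lam*a*(1-a) * (((Q1:ℝ)-1)^2+((Q2:ℝ)+1)^2)
        + ((1-lam)*((1-a)^2+a^2) + lam*a*(1-a)) * ((Q1:ℝ)^2+(Q2:ℝ)^2) := by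
      have he : (fun t : ℕ×ℕ => Pker a lam (Q1, Q2) t * (((t.1:ℝ))^2 + ((t.2:ℝ))^2))
          = fun t : ℕ×ℕ => (if t = (Q1, Q2+1) then lam*((1-a)^2+a^2) else 0) * (((t.1:ℝ))^2 + ((t.2:ℝ))^2)
          + (if t = (Q1, Q2-1) then (1-lam)*a*(1-a) else 0) * (((t.1:ℝ))^2 + ((t.2:ℝ))^2)
          + (if t = (Q1-1, Q2) then (1-lam)*a*(1-a) else 0) * (((t.1:ℝ))^2 + ((t.2:ℝ))^2)
          + (if t = (Q1-1, Q2+1) then lam*a*(1-a) else 0) * (((t.1:ℝ))^2 + ((t.2:ℝ))^2)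
          + (if t = (Q1, Q2) then (1-lam)*((1-a)^2+a^2) + lam*a*(1-a) else 0) * (((t.1:ℝ))^2 + ((t.2:ℝ))^2) := by
        funext t
        simp only [Pker]
        rw [if_pos h1]
        ring
      rw [he, tsum5]
      push_cast [e1, Nat.cast_sub (show 1 ≤ Q2 by omega)]
      ring
    rw [hsum]
    have hq : (Q2:ℝ) ≤ (Q1:ℝ) := by exact_mod_cast h1.1.le
    nlinarith [mul_nonneg hl.le (sub_nonneg.mpr hq), hC]
  · by_cases h2 : Q1 < Q2 ∧ 0 < Q1
    · -- case j > i > 0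
      have e2 : ((Q2-1:ℕ):ℝ) = (Q2:ℝ)-1 := by
        rw [Nat.cast_sub (by omega)]; norm_num
      have hsum : (∑' t : ℕ × ℕ, Pker a lam (Q1, Q2) t * (((t.1 : ℝ))^2 + ((t.2 : ℝ))^2))
          = lam*((1-a)^2+a^2) * (((Q1:ℝ)+1)^2+(Q2:ℝ)^2)
          + (1-lam)*a*(1-a) * ((Q1:ℝ)^2+((Q2:ℝ)-1)^2)
          + (1-lam)*a*(1-a) * (((Q1:ℝ)-1)^2+(Q2:ℝ)^2)
          + lam*a*(1-a) * (((Q1:ℝ)+1)^2+((Q2:ℝ)-1)^2)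
          + ((1-lam)*((1-a)^2+a^2) + lam*a*(1-a)) * ((Q1:ℝ)^2+(Q2:ℝ)^2) := by
        have he : (fun t : ℕ×ℕ => Pker a lam (Q1, Q2) t * (((t.1:ℝ))^2 + ((t.2:ℝ))^2))
            = fun t : ℕ×ℕ => (if t = (Q1+1, Q2) then lam*((1-a)^2+a^2) else 0) * (((t.1:ℝ))^2 + ((t.2:ℝ))^2)
            + (if t = (Q1, Q2-1) then (1-lam)*a*(1-a) else 0) * (((t.1:ℝ))^2 + ((t.2:ℝ))^2)
            + (if t = (Q1-1, Q2) then (1-lam)*a*(1-a) else 0) * (((t.1:ℝ))^2 + ((t.2:ℝ))^2)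
            + (if t = (Q1+1, Q2-1) then lam*a*(1-a) else 0) * (((t.1:ℝ))^2 + ((t.2:ℝ))^2)
            + (if t = (Q1, Q2) then (1-lam)*((1-a)^2+a^2) + lam*a*(1-a) else 0) * (((t.1:ℝ))^2 + ((t.2:ℝ))^2) := by
          funext t
          simp only [Pker]
          rw [if_neg h1, if_pos h2]
          ring
        rw [he, tsum5]
        push_cast [e2, Nat.cast_sub (show 1 ≤ Q1 by omega)]
        ring
      rw [hsum]
      have hq : (Q1:ℝ) ≤ (Q2:ℝ) := by exact_mod_cast h2.1.le
      nlinarith [mul_nonneg hl.le (sub_nonneg.mpr hq), hC]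
    · by_cases h3 : 0 < Q1 ∧ Q2 = 0
      · -- case i > 0, j = 0
        obtain ⟨h3a, h3b⟩ := h3
        subst h3b
        have hsum : (∑' t : ℕ × ℕ, Pker a lam (Q1, 0) t * (((t.1 : ℝ))^2 + ((t.2 : ℝ))^2))
            = lam*((1-a)^2+a^2) * ((Q1:ℝ)^2+1)
            + (1-lam)*a * (((Q1:ℝ)-1)^2)
            + lam*a*(1-a) * (((Q1:ℝ)-1)^2+1)
            + ((1-lam)*(1-a) + lam*a*(1-a)) * ((Q1:ℝ)^2) := by
          have he : (fun t : ℕ×ℕ => Pker a lam (Q1, 0) t * (((t.1:ℝ))^2 + ((t.2:ℝ))^2))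
              = fun t : ℕ×ℕ => (if t = (Q1, 1) then lam*((1-a)^2+a^2) else 0) * (((t.1:ℝ))^2 + ((t.2:ℝ))^2)
              + (if t = (Q1-1, 0) then (1-lam)*a else 0) * (((t.1:ℝ))^2 + ((t.2:ℝ))^2)
              + (if t = (Q1-1, 1) then lam*a*(1-a) else 0) * (((t.1:ℝ))^2 + ((t.2:ℝ))^2)
              + (if t = (Q1, 0) then (1-lam)*(1-a) + lam*a*(1-a) else 0) * (((t.1:ℝ))^2 + ((t.2:ℝ))^2) := by
            funext t
            simp only [Pker]
            rw [if_neg (by omega), if_neg (by omega), if_pos (And.intro h3a True.intro)]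
            ring
          rw [he, tsum4]
          push_cast [Nat.cast_sub (show 1 ≤ Q1 by omega)]
          ring
        rw [hsum]
        have hq1 : (1:ℝ) ≤ (Q1:ℝ) := by exact_mod_cast h3a
        nlinarith [mul_nonneg (by linarith : (0:ℝ) ≤ (Q1:ℝ))
            (by nlinarith : (0:ℝ) ≤ 2*a^2*(1-lam)+lam),
            mul_pos (sub_pos.mpr hl1) (sub_pos.mpr ha1)]
      · by_cases h4 : 0 < Q2 ∧ Q1 = 0
        · -- case j > 0, i = 0
          obtain ⟨h4a, h4b⟩ := h4
          subst h4b
          have hsum : (∑' t : ℕ × ℕ, Pker a lam (0, Q2) t * (((t.1 : ℝ))^2 + ((t.2 : ℝ))^2))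
              = lam*((1-a)^2+a^2) * (1+(Q2:ℝ)^2)
              + (1-lam)*a * (((Q2:ℝ)-1)^2)
              + lam*a*(1-a) * (1+((Q2:ℝ)-1)^2)
              + ((1-lam)*(1-a) + lam*a*(1-a)) * ((Q2:ℝ)^2) := by
            have he : (fun t : ℕ×ℕ => Pker a lam (0, Q2) t * (((t.1:ℝ))^2 + ((t.2:ℝ))^2))
                = fun t : ℕ×ℕ => (if t = (1, Q2) then lam*((1-a)^2+a^2) else 0) * (((t.1:ℝ))^2 + ((t.2:ℝ))^2)
                + (if t = (0, Q2-1) then (1-lam)*a else 0) * (((t.1:ℝ))^2 + ((t.2:ℝ))^2)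
                + (if t = (1, Q2-1) then lam*a*(1-a) else 0) * (((t.1:ℝ))^2 + ((t.2:ℝ))^2)
                + (if t = (0, Q2) then (1-lam)*(1-a) + lam*a*(1-a) else 0) * (((t.1:ℝ))^2 + ((t.2:ℝ))^2) := by
              funext t
              simp only [Pker]
              rw [if_neg (by omega), if_neg (by omega), if_neg (by omega), if_pos (And.intro h4a True.intro)]
              ring
            rw [he, tsum4]
            push_cast [Nat.cast_sub (show 1 ≤ Q2 by omega)]
            ring
          rw [hsum]
          have hq1 : (1:ℝ) ≤ (Q2:ℝ) := by exact_mod_cast h4a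
          nlinarith [mul_nonneg (by linarith : (0:ℝ) ≤ (Q2:ℝ))
              (by nlinarith : (0:ℝ) ≤ 2*a^2*(1-lam)+lam),
              mul_pos (sub_pos.mpr hl1) (sub_pos.mpr ha1)]
        · by_cases h5 : 0 < Q1
          · -- diagonal case i = j > 0
            have hd : Q1 = Q2 := by omega
            subst hd
            have e1 : ((Q1-1:ℕ):ℝ) = (Q1:ℝ)-1 := by
              rw [Nat.cast_sub (by omega)]; norm_num
            have hsum : (∑' t : ℕ × ℕ, Pker a lam (Q1, Q1) t * (((t.1 : ℝ))^2 + ((t.2 : ℝ))^2))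
                = lam/2*((1-a)^2+a^2) * (((Q1:ℝ)+1)^2+(Q1:ℝ)^2)
                + lam/2*((1-a)^2+a^2) * ((Q1:ℝ)^2+((Q1:ℝ)+1)^2)
                + (1-lam)*(1-a)*a * (((Q1:ℝ)-1)^2+(Q1:ℝ)^2)
                + (1-lam)*(1-a)*a * ((Q1:ℝ)^2+((Q1:ℝ)-1)^2)
                + lam/2*(1-a)*a * (((Q1:ℝ)+1)^2+((Q1:ℝ)-1)^2)
                + lam/2*(1-a)*a * (((Q1:ℝ)-1)^2+((Q1:ℝ)+1)^2)
                + ((1-lam)*((1-a)^2+a^2) + lam*a*(1-a)) * ((Q1:ℝ)^2+(Q1:ℝ)^2) := by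
              have he : (fun t : ℕ×ℕ => Pker a lam (Q1, Q1) t * (((t.1:ℝ))^2 + ((t.2:ℝ))^2))
                  = fun t : ℕ×ℕ => (if t = (Q1+1, Q1) then lam/2*((1-a)^2+a^2) else 0) * (((t.1:ℝ))^2 + ((t.2:ℝ))^2)
                  + (if t = (Q1, Q1+1) then lam/2*((1-a)^2+a^2) else 0) * (((t.1:ℝ))^2 + ((t.2:ℝ))^2)
                  + (if t = (Q1-1, Q1) then (1-lam)*(1-a)*a else 0) * (((t.1:ℝ))^2 + ((t.2:ℝ))^2)
                  + (if t = (Q1, Q1-1) then (1-lam)*(1-a)*a else 0) * (((t.1:ℝ))^2 + ((t.2:ℝ))^2)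
                  + (if t = (Q1+1, Q1-1) then lam/2*(1-a)*a else 0) * (((t.1:ℝ))^2 + ((t.2:ℝ))^2)
                  + (if t = (Q1-1, Q1+1) then lam/2*(1-a)*a else 0) * (((t.1:ℝ))^2 + ((t.2:ℝ))^2)
                  + (if t = (Q1, Q1) then (1-lam)*((1-a)^2+a^2) + lam*a*(1-a) else 0) * (((t.1:ℝ))^2 + ((t.2:ℝ))^2) := by
                funext t
                simp only [Pker]
                rw [if_neg (by omega), if_neg (by omega), if_neg (by omega), if_neg (by omega),
                    if_pos h5]
                ring
              rw [he, tsum7]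
              push_cast [e1]
              ring
            rw [hsum]
            nlinarith [hC, Nat.cast_nonneg (α := ℝ) Q1]
          · -- origin
            have hz1 : Q1 = 0 := by omega
            have hz2 : Q2 = 0 := by omega
            subst hz1; subst hz2
            have hsum : (∑' t : ℕ × ℕ, Pker a lam (0, 0) t * (((t.1 : ℝ))^2 + ((t.2 : ℝ))^2))
                = lam/2*(1-a) * 1 + lam/2*(1-a) * 1 + ((1-lam) + lam*a) * 0 := by
              have he : (fun t : ℕ×ℕ => Pker a lam (0, 0) t * (((t.1:ℝ))^2 + ((t.2:ℝ))^2))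
                  = fun t : ℕ×ℕ => (if t = (1, 0) then lam/2*(1-a) else 0) * (((t.1:ℝ))^2 + ((t.2:ℝ))^2)
                  + (if t = (0, 1) then lam/2*(1-a) else 0) * (((t.1:ℝ))^2 + ((t.2:ℝ))^2)
                  + (if t = (0, 0) then (1-lam) + lam*a else 0) * (((t.1:ℝ))^2 + ((t.2:ℝ))^2) := by
                funext t
                simp only [Pker]
                rw [if_neg (by omega), if_neg (by omega), if_neg (by simp), if_neg (by simp),
                    if_neg (by omega)]
                ring
              rw [he, tsum3]
              norm_num
            rw [hsum]
            norm_num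
            nlinarith
end

section
/- Let γ ∈ ℂ with 0 < |γ| < 1. Then the kernel equation, regarded as a cubic polynomial equation in δ, has exactly one root δ (counted with multiplicity) with |δ| < |γ|, and that root is nonzero. -/
/-!
Write the cubic as `A δ³ + (C γ + B) δ² - (A + B + 2C) γ δ + C γ²` with `A, C > 0`, `B ≥ 0`
(the middle coefficient is `A + B + 2C` because `ā² + a² + 2āa = 1`). Put `r = |γ|`. Comparing the
moduli of `(A + B + 2C) γ δ` and of the other three terms leads to the real majorant
`H(s) = A s³ + (C r + B) s² - (A + B + 2C) r s + C r²`, which is positive at `0` and negative at `r`,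
hence has a root `ρ ∈ (0, r)` with `H < 0` on `(ρ, r)` and `H'(ρ) < 0`. Then every root in the disc
`|δ| < r` lies in `|δ| ≤ ρ`, and on that closed disc `δ ↦ (A δ³ + (C γ + B) δ² + C γ²) / ((A + B + 2C) γ)`
is a contraction (its Lipschitz constant is bounded through `H'(ρ) < 0`) mapping the disc into itself
(because `H(ρ) = 0`). Its fixed point is the root; the same bound shows that it is the only root
there and a simple one. It is nonzero because the constant term `C γ²` is.
-/

open Polynomial in
/-- The kernel equation as a cubic polynomial in δ (for fixed γ):
λāa·δ³ + (λ̄āa·γ + λ(a²+ā²))·δ² − (1 − (λ̄(ā²+a²)+λaā))·γ·δ + λ̄āa·γ² . -/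
noncomputable def kernelCubic (a lam : ℝ) (g : ℂ) : Polynomial ℂ :=
  C ((lam:ℂ)*(1-(a:ℂ))*(a:ℂ)) * X^3
  + C ((1-(lam:ℂ))*(1-(a:ℂ))*(a:ℂ)*g + (lam:ℂ)*((a:ℂ)^2+(1-(a:ℂ))^2)) * X^2
  - C ((1 - ((1-(lam:ℂ))*((1-(a:ℂ))^2+(a:ℂ)^2) + (lam:ℂ)*(a:ℂ)*(1-(a:ℂ)))) * g) * X
  + C ((1-(lam:ℂ))*(1-(a:ℂ))*(a:ℂ)*g^2)

open Polynomial in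
theorem Polynomial.card_roots_filter_eq_one {R : Type*} [CommRing R] [IsDomain R] {p : R[X]}
    {S : R → Prop} [DecidablePred S] {u : R} (hp : p ≠ 0) (hu : p.IsRoot u)
    (hu' : ¬ (derivative p).IsRoot u) (hSu : S u) (hS : ∀ z, p.IsRoot z → S z → z = u) :
    Multiset.card (p.roots.filter S) = 1 := by
  let := Classical.decEq R
  have hfilter : ∀ z ∈ p.roots, S z ↔ z = u :=
    fun z hz => ⟨hS z ((mem_roots hp).1 hz), fun h => h ▸ hSu⟩
  rw [Multiset.filter_congr hfilter, Multiset.filter_eq', Multiset.card_replicate, count_roots]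
  refine le_antisymm ?_ ((rootMultiplicity_pos hp).2 hu)
  exact not_lt.1 fun h => hu' ((one_lt_rootMultiplicity_iff_isRoot hp).1 h).2

namespace KernelCubic

section Majorant

variable {A B C r : ℝ}

def majorant (A B C r s : ℝ) : ℝ := A*s^3 + (C*r+B)*s^2 - (A+B+2*C)*r*s + C*r^2

theorem exists_root_majorant (hA : 0 ≤ A) (hC : 0 < C) (hr0 : 0 < r) (hr1 : r < 1) :
    ∃ ρ ∈ Set.Ioo 0 r, majorant A B C r ρ = 0 ∧ (∀ s ∈ Set.Ioo ρ r, majorant A B C r s < 0) ∧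
      3*A*ρ^2 + 2*(C*r+B)*ρ < (A+B+2*C)*r := by
  have hcont : Continuous (majorant A B C r) := by unfold majorant; fun_prop
  have hsign : (0:ℝ) ∈ Set.Ioo (majorant A B C r r) (majorant A B C r 0) := by
    constructor
    · have : majorant A B C r r = r^2 * ((A + C) * (r - 1)) := by unfold majorant; ring
      rw [this]
      exact mul_neg_of_pos_of_neg (by positivity) (mul_neg_of_pos_of_neg (by linarith) (by linarith))
    · have : majorant A B C r 0 = C * r^2 := by unfold majorant; ring
      rw [this]; positivity
  obtain ⟨ρ, ⟨hρ0, hρr⟩, hρ⟩ := intermediate_value_Ioo' hr0.le hcont.continuousOn hsign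
  set G : ℝ → ℝ := fun s => A*s^2 + (A*ρ+C*r+B)*s + (A*ρ^2+(C*r+B)*ρ-(A+B+2*C)*r) with hG
  have hfac : ∀ s, majorant A B C r s = (s - ρ) * G s := fun s => by
    simp only [majorant, hG] at hρ ⊢; linear_combination hρ
  have hG0 : G 0 < 0 := by
    have := hfac 0
    have : 0 < majorant A B C r 0 := hsign.2
    nlinarith
  have hGr : G r < 0 := by
    have := hfac r
    have : majorant A B C r r < 0 := hsign.1
    nlinarith
  -- `G` is convex, so it stays below the chord between `(0, G 0)` and `(r, G r)`.
  have hGneg : ∀ s ∈ Set.Icc 0 r, G s < 0 := by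
    rintro s ⟨hs0, hsr⟩
    have hchord : r * G s = (r - s) * G 0 + s * G r + A * r * s * (s - r) := by simp only [hG]; ring
    have hconv : A * r * s * (s - r) ≤ 0 :=
      mul_nonpos_of_nonneg_of_nonpos (by positivity) (by linarith)
    set M := max (G 0) (G r)
    have hM : M < 0 := max_lt hG0 hGr
    have h0 : (r - s) * G 0 ≤ (r - s) * M := mul_le_mul_of_nonneg_left (le_max_left _ _) (by linarith)
    have hr : s * G r ≤ s * M := mul_le_mul_of_nonneg_left (le_max_right _ _) hs0
    have : r * G s < 0 := by nlinarith
    exact neg_of_mul_neg_right this hr0.le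
  refine ⟨ρ, ⟨hρ0, hρr⟩, hρ, fun s ⟨hρs, hsr⟩ => ?_, ?_⟩
  · rw [hfac]
    exact mul_neg_of_pos_of_neg (by linarith) (hGneg s ⟨by linarith, hsr.le⟩)
  · have := hGneg ρ ⟨hρ0.le, hρr.le⟩
    simp only [hG] at this
    linarith

end Majorant

section Disc

variable {A B C : ℝ} {g : ℂ}

def cubicFun (A B C : ℝ) (g z : ℂ) : ℂ :=
  A*z^3 + (C*g+B)*z^2 - ((A+B+2*C : ℝ) : ℂ)*g*z + C*g^2

def secant (A B C : ℝ) (g x y : ℂ) : ℂ := A*(x^2+x*y+y^2) + (C*g+B)*(x+y)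

noncomputable def picardMap (A B C : ℝ) (g z : ℂ) : ℂ :=
  (A*z^3 + (C*g+B)*z^2 + C*g^2) / (((A+B+2*C : ℝ) : ℂ)*g)

theorem cubicFun_sub_cubicFun (x y : ℂ) :
    cubicFun A B C g x - cubicFun A B C g y =
      (x - y) * (secant A B C g x y - ((A+B+2*C : ℝ) : ℂ)*g) := by
  simp only [cubicFun, secant]; ring

theorem picardMap_sub_picardMap (x y : ℂ) :
    picardMap A B C g x - picardMap A B C g y =
      (x - y) * secant A B C g x y / (((A+B+2*C : ℝ) : ℂ)*g) := by
  simp only [picardMap, secant]; ring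

theorem picardMap_eq_self_iff (hK : 0 < A+B+2*C) (hg : g ≠ 0) (z : ℂ) :
    picardMap A B C g z = z ↔ cubicFun A B C g z = 0 := by
  have : ((A+B+2*C : ℝ) : ℂ)*g ≠ 0 := mul_ne_zero (by exact_mod_cast hK.ne') hg
  rw [picardMap, div_eq_iff this, cubicFun]
  constructor <;> intro h <;> linear_combination h

theorem cubicFun_zero : cubicFun A B C g 0 = C*g^2 := by simp [cubicFun]

theorem norm_ofReal_mul_add_ofReal_le (hB : 0 ≤ B) (hC : 0 ≤ C) : ‖(C:ℂ)*g+B‖ ≤ C*‖g‖+B := by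
  refine (norm_add_le _ _).trans_eq ?_
  rw [norm_mul, Complex.norm_of_nonneg hC, Complex.norm_of_nonneg hB]

theorem norm_secant_le (hA : 0 ≤ A) (hB : 0 ≤ B) (hC : 0 ≤ C) {x y : ℂ} {ρ : ℝ}
    (hx : ‖x‖ ≤ ρ) (hy : ‖y‖ ≤ ρ) :
    ‖secant A B C g x y‖ ≤ 3*A*ρ^2 + 2*(C*‖g‖+B)*ρ := by
  have hρ : 0 ≤ ρ := (norm_nonneg x).trans hx
  have hquad : ‖x^2+x*y+y^2‖ ≤ 3*ρ^2 := by
    refine norm_add₃_le.trans ?_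
    rw [norm_pow, norm_mul, norm_pow]
    have := mul_le_mul hx hy (norm_nonneg y) hρ
    nlinarith [pow_le_pow_left₀ (norm_nonneg x) hx 2, pow_le_pow_left₀ (norm_nonneg y) hy 2]
  have hlin : ‖x+y‖ ≤ 2*ρ := (norm_add_le x y).trans (by linarith)
  calc ‖secant A B C g x y‖
      ≤ ‖(A:ℂ)‖ * ‖x^2+x*y+y^2‖ + ‖(C:ℂ)*g+B‖ * ‖x+y‖ := by
        rw [← norm_mul, ← norm_mul]; exact norm_add_le _ _
    _ ≤ A * (3*ρ^2) + (C*‖g‖+B) * (2*ρ) := by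
        rw [Complex.norm_of_nonneg hA]
        gcongr
        exact norm_ofReal_mul_add_ofReal_le hB hC
    _ = 3*A*ρ^2 + 2*(C*‖g‖+B)*ρ := by ring

theorem norm_picardMap_le (hA : 0 ≤ A) (hB : 0 ≤ B) (hC : 0 ≤ C) {z : ℂ} {s : ℝ}
    (hz : ‖z‖ ≤ s) :
    ‖picardMap A B C g z‖ ≤ (A*s^3 + (C*‖g‖+B)*s^2 + C*‖g‖^2) / ((A+B+2*C)*‖g‖) := by
  rw [picardMap, norm_div, norm_mul, Complex.norm_of_nonneg (by positivity)]
  gcongr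
  calc ‖(A:ℂ)*z^3 + (C*g+B)*z^2 + C*g^2‖
      ≤ ‖(A:ℂ)‖ * ‖z‖^3 + ‖(C:ℂ)*g+B‖ * ‖z‖^2 + ‖(C:ℂ)‖ * ‖g‖^2 := by
        rw [← norm_pow, ← norm_pow, ← norm_pow, ← norm_mul, ← norm_mul, ← norm_mul]
        exact norm_add₃_le
    _ ≤ A*s^3 + (C*‖g‖+B)*s^2 + C*‖g‖^2 := by
        rw [Complex.norm_of_nonneg hA, Complex.norm_of_nonneg hC]
        gcongr
        exact norm_ofReal_mul_add_ofReal_le hB hC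

theorem exists_root_norm_le (hA : 0 ≤ A) (hB : 0 ≤ B) (hC : 0 < C) (hg : g ≠ 0) {ρ : ℝ}
    (hρ : 0 ≤ ρ) (hmaj : majorant A B C ‖g‖ ρ = 0)
    (hder : 3*A*ρ^2 + 2*(C*‖g‖+B)*ρ < (A+B+2*C)*‖g‖) :
    ∃ u, ‖u‖ ≤ ρ ∧ cubicFun A B C g u = 0 := by
  have hK : 0 < A+B+2*C := by linarith
  have hr : 0 < ‖g‖ := norm_pos_iff.2 hg
  have hmaps : Set.MapsTo (picardMap A B C g) (Metric.closedBall 0 ρ) (Metric.closedBall 0 ρ) := by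
    intro z hz
    rw [mem_closedBall_zero_iff] at hz ⊢
    refine (norm_picardMap_le hA hB hC.le hz).trans_eq ?_
    rw [div_eq_iff (by positivity)]
    unfold majorant at hmaj
    linarith
  set L := (3*A*ρ^2 + 2*(C*‖g‖+B)*ρ) / ((A+B+2*C)*‖g‖) with hL
  have hL0 : 0 ≤ L := by positivity
  have hL1 : L < 1 := (div_lt_one (by positivity)).2 hder
  have hLip : LipschitzOnWith L.toNNReal (picardMap A B C g) (Metric.closedBall 0 ρ) := by
    refine LipschitzOnWith.of_dist_le_mul fun x hx y hy => ?_
    rw [mem_closedBall_zero_iff] at hx hy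
    rw [Real.coe_toNNReal _ hL0, dist_eq_norm, dist_eq_norm, picardMap_sub_picardMap, norm_div,
      norm_mul, norm_mul, Complex.norm_of_nonneg hK.le]
    calc ‖x - y‖ * ‖secant A B C g x y‖ / ((A+B+2*C) * ‖g‖)
        ≤ ‖x - y‖ * (3*A*ρ^2 + 2*(C*‖g‖+B)*ρ) / ((A+B+2*C) * ‖g‖) := by
          gcongr; exact norm_secant_le hA hB hC.le hx hy
      _ = L * ‖x - y‖ := by rw [hL]; ring
  obtain ⟨u, hu, hfix, -⟩ := ContractingWith.exists_fixedPoint' Metric.isClosed_closedBall.isComplete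
    hmaps ⟨Real.toNNReal_lt_one.2 hL1, hLip.mapsToRestrict hmaps⟩ (Metric.mem_closedBall_self hρ)
    (edist_ne_top _ _)
  exact ⟨u, mem_closedBall_zero_iff.1 hu, (picardMap_eq_self_iff hK hg u).1 hfix⟩

theorem exists_unique_root_norm_lt (hA : 0 ≤ A) (hB : 0 ≤ B) (hC : 0 < C) (hg0 : g ≠ 0)
    (hg1 : ‖g‖ < 1) :
    ∃ u, ‖u‖ < ‖g‖ ∧ cubicFun A B C g u = 0 ∧ secant A B C g u u ≠ ((A+B+2*C : ℝ) : ℂ)*g ∧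
      ∀ z, cubicFun A B C g z = 0 → ‖z‖ < ‖g‖ → z = u := by
  have hK : 0 < A+B+2*C := by linarith
  obtain ⟨ρ, ⟨hρ0, hρr⟩, hmaj, hneg, hder⟩ :=
    exists_root_majorant (B := B) hA hC (norm_pos_iff.2 hg0) hg1
  obtain ⟨u, hu, hroot⟩ := exists_root_norm_le hA hB hC hg0 hρ0.le hmaj hder
  have hsec : ∀ x y, ‖x‖ ≤ ρ → ‖y‖ ≤ ρ → secant A B C g x y ≠ ((A+B+2*C : ℝ) : ℂ)*g := by
    intro x y hx hy h
    have := norm_secant_le hA hB hC.le (g := g) hx hy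
    rw [h, norm_mul, Complex.norm_of_nonneg hK.le] at this
    linarith
  -- A root `z` is a fixed point of `picardMap`, which forces `majorant ‖z‖ ≥ 0`.
  have hsmall : ∀ z, cubicFun A B C g z = 0 → ‖z‖ < ‖g‖ → ‖z‖ ≤ ρ := by
    intro z hz hzr
    by_contra! hρz
    have hbound := norm_picardMap_le hA hB hC.le (g := g) (le_refl ‖z‖)
    rw [(picardMap_eq_self_iff hK hg0 z).2 hz, le_div_iff₀ (by positivity)] at hbound
    have := hneg ‖z‖ ⟨hρz, hzr⟩
    unfold majorant at this
    linarith
  refine ⟨u, hu.trans_lt hρr, hroot, hsec u u hu hu, fun z hz hzr => ?_⟩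
  have hdiff := cubicFun_sub_cubicFun (A := A) (B := B) (C := C) (g := g) z u
  rw [hz, hroot, sub_zero, eq_comm, mul_eq_zero, sub_eq_zero, sub_eq_zero] at hdiff
  exact hdiff.resolve_right (hsec z u (hsmall z hz hzr) hu)

end Disc

open Polynomial

theorem eval_kernelCubic (a lam : ℝ) (g z : ℂ) :
    (kernelCubic a lam g).eval z =
      cubicFun (lam*(1-a)*a) (lam*(a^2+(1-a)^2)) ((1-lam)*(1-a)*a) g z := by
  simp only [kernelCubic, cubicFun, eval_add, eval_sub, eval_mul, eval_pow, eval_C, eval_X]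
  push_cast
  ring

theorem eval_derivative_kernelCubic (a lam : ℝ) (g z : ℂ) :
    (derivative (kernelCubic a lam g)).eval z =
      secant (lam*(1-a)*a) (lam*(a^2+(1-a)^2)) ((1-lam)*(1-a)*a) g z z -
        ((lam*(1-a)*a + lam*(a^2+(1-a)^2) + 2*((1-lam)*(1-a)*a) : ℝ) : ℂ)*g := by
  simp only [kernelCubic, secant, derivative_add, derivative_sub, derivative_mul, derivative_C,
    derivative_X_pow, derivative_X, eval_add, eval_sub, eval_mul, eval_pow, eval_C, eval_X,
    eval_zero, eval_one]
  push_cast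
  ring

end KernelCubic

/-- for 0 < |γ| < 1 the kernel cubic in δ has exactly one root
(with multiplicity) with |δ| < |γ|, and that root is nonzero. -/
theorem stmt4 (a lam : ℝ) (ha : 0 < a) (ha1 : a < 1) (hl : 0 < lam) (hl1 : lam < 1)
    (g : ℂ) (hg0 : g ≠ 0) (hg1 : ‖g‖ < 1) :
    Multiset.card ((kernelCubic a lam g).roots.filter
        (fun z => ‖z‖ < ‖g‖)) = 1 ∧
    ∀ z ∈ (kernelCubic a lam g).roots, ‖z‖ < ‖g‖ → z ≠ 0 := by
  open KernelCubic Polynomial in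
  have h1a : 0 < 1 - a := by linarith
  have hA : 0 ≤ lam*(1-a)*a := by positivity
  have hB : 0 ≤ lam*(a^2+(1-a)^2) := by positivity
  have hC : 0 < (1-lam)*(1-a)*a := by
    have : 0 < 1 - lam := by linarith
    positivity
  obtain ⟨u, hur, hu, hu', huniq⟩ := exists_unique_root_norm_lt hA hB hC hg0 hg1
  have hroot_ne : ∀ z, (kernelCubic a lam g).IsRoot z → z ≠ 0 := by
    rintro z hz rfl
    rw [IsRoot, eval_kernelCubic, cubicFun_zero] at hz
    exact mul_ne_zero (by exact_mod_cast hC.ne') (pow_ne_zero 2 hg0) hz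
  have hp : kernelCubic a lam g ≠ 0 := fun h => hroot_ne 0 (by simp [h]) rfl
  refine ⟨card_roots_filter_eq_one hp (by rwa [IsRoot, eval_kernelCubic]) ?_ hur ?_,
    fun z hz _ => hroot_ne z ((mem_roots hp).1 hz)⟩
  · rwa [IsRoot, eval_derivative_kernelCubic, sub_eq_zero]
  · intro z hz
    rw [IsRoot, eval_kernelCubic] at hz
    exact huniq z hz
end

section
/- Let δ ∈ ℂ with 0 < |δ| < 1. Then the kernel equation, regarded as a quadratic polynomial equation in γ, has exactly one root γ (counted with multiplicity) with |γ| < |δ|, and that root is nonzero. -/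
/-!
With `A = λ̄āa`, `c₁ = λ(a² + ā²)` and `c₂ = λāa`, the coefficient of `γδ` in the kernel equation
is `2A + c₁ + c₂`, so the quadratic in `γ` is `A γ² + B γ + K` with `B = δ (A δ - (2A + c₁ + c₂))`
and `K = δ² (c₁ + c₂ δ)`. For `r = |δ| < 1` the middle term dominates on the circle `|γ| = r`:
`A r² + |K| < |B| r`, with margin at least `r² (A + c₂) (1 - r)`. If `x₁, x₂` are the roots, Vieta
gives `|K| = A |x₁| |x₂|` and `|B| ≤ A (|x₁| + |x₂|)`, so the domination forces
`(r - |x₁|) (r - |x₂|) < 0`: exactly one root lies inside the circle. No root is `0`, because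
`K ≠ 0` as `c₂ |δ| < c₁`.
-/

open Polynomial in
/-- The kernel equation as a quadratic polynomial in γ (for fixed δ):
λ̄āa·γ² + (λ̄āa·δ² − (1 − (λ̄(ā²+a²)+λaā))·δ)·γ + (λ(a²+ā²)·δ² + λāa·δ³). -/
noncomputable def kernelQuadG (a lam : ℝ) (d : ℂ) : Polynomial ℂ :=
  C ((1-(lam:ℂ))*(1-(a:ℂ))*(a:ℂ)) * X^2
  + C ((1-(lam:ℂ))*(1-(a:ℂ))*(a:ℂ)*d^2
      - (1 - ((1-(lam:ℂ))*((1-(a:ℂ))^2+(a:ℂ)^2) + (lam:ℂ)*(a:ℂ)*(1-(a:ℂ)))) * d) * X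
  + C ((lam:ℂ)*((a:ℂ)^2+(1-(a:ℂ))^2)*d^2 + (lam:ℂ)*(1-(a:ℂ))*(a:ℂ)*d^3)

open Polynomial

namespace Polynomial

theorem exists_roots_quadratic_eq_pair {K : Type*} [Field K] [IsAlgClosed K] {a b c : K}
    (ha : a ≠ 0) : ∃ x₁ x₂, (C a * X ^ 2 + C b * X + C c).roots = {x₁, x₂} := by
  apply Multiset.card_eq_two.mp
  rw [IsAlgClosed.card_roots_eq_natDegree, natDegree_quadratic ha]

theorem card_filter_roots_quadratic_norm_lt_eq_one {K : Type*} [NormedField K] [IsAlgClosed K]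
    {a b c : K} {r : ℝ} (ha : a ≠ 0) (hdom : ‖a‖ * r ^ 2 + ‖c‖ < ‖b‖ * r) :
    ((C a * X ^ 2 + C b * X + C c).roots.filter (‖·‖ < r)).card = 1 := by
  obtain ⟨x₁, x₂, hroots⟩ := exists_roots_quadratic_eq_pair (b := b) (c := c) ha
  have hr : 0 ≤ r := by
    by_contra! hr
    nlinarith [norm_nonneg a, norm_nonneg b, norm_nonneg c]
  have hb : ‖b‖ ≤ ‖a‖ * (‖x₁‖ + ‖x₂‖) := by
    rw [eq_neg_mul_add_of_roots_quadratic_eq_pair hroots, norm_mul, norm_neg]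
    gcongr
    exact norm_add_le x₁ x₂
  have hc : ‖c‖ = ‖a‖ * ‖x₁‖ * ‖x₂‖ := by
    rw [eq_mul_mul_of_roots_quadratic_eq_pair hroots, norm_mul, norm_mul]
  have hsep : ‖a‖ * ((r - ‖x₁‖) * (r - ‖x₂‖)) < 0 := by
    nlinarith [mul_le_mul_of_nonneg_right hb hr]
  rw [hroots, Multiset.insert_eq_cons, Multiset.filter_cons, Multiset.filter_singleton]
  rcases mul_neg_iff.mp ((pos_iff_neg_of_mul_neg hsep).mp (norm_pos_iff.mpr ha)) with
    ⟨h₁, h₂⟩ | ⟨h₁, h₂⟩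
  · simp [not_lt.mpr (sub_nonpos.mp h₂.le), sub_pos.mp h₁]
  · simp [not_lt.mpr (sub_nonpos.mp h₁.le), sub_pos.mp h₂]

theorem ne_zero_of_mem_roots_quadratic {R : Type*} [CommRing R] [IsDomain R] {a b c z : R}
    (hc : c ≠ 0) (hz : z ∈ (C a * X ^ 2 + C b * X + C c).roots) : z ≠ 0 := by
  rintro rfl
  exact hc (by simpa using (mem_roots'.mp hz).2)

end Polynomial

theorem kernelQuadG_eq {a lam A c₁ c₂ : ℝ} (hA : A = (1 - lam) * (1 - a) * a)
    (hc₁ : c₁ = lam * (a ^ 2 + (1 - a) ^ 2)) (hc₂ : c₂ = lam * (1 - a) * a) (d : ℂ) :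
    kernelQuadG a lam d = C (A : ℂ) * X ^ 2 + C (d * (A * d - (2 * A + c₁ + c₂))) * X
      + C (d ^ 2 * (c₁ + c₂ * d)) := by
  subst hA hc₁ hc₂
  unfold kernelQuadG
  push_cast
  ring_nf

theorem norm_kernel_coeff_lt {A c₁ c₂ : ℝ} (hA : 0 < A) (hc₁ : 0 ≤ c₁) (hc₂ : 0 ≤ c₂) {d : ℂ}
    (hd1 : ‖d‖ < 1) : A + ‖(c₁ : ℂ) + c₂ * d‖ < ‖(A : ℂ) * d - (2 * A + c₁ + c₂)‖ := by
  have hd := norm_nonneg d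
  calc A + ‖(c₁ : ℂ) + c₂ * d‖ ≤ A + (c₁ + c₂ * ‖d‖) := by
        gcongr
        refine (norm_add_le _ _).trans_eq ?_
        simp [Complex.norm_real, abs_of_nonneg hc₁, abs_of_nonneg hc₂]
    _ < 2 * A + c₁ + c₂ - A * ‖d‖ := by nlinarith
    _ = ‖((2 * A + c₁ + c₂ : ℝ) : ℂ)‖ - ‖(A : ℂ) * d‖ := by
        rw [norm_mul, Complex.norm_real, Complex.norm_real, Real.norm_of_nonneg hA.le,
          Real.norm_of_nonneg (by positivity)]
    _ ≤ ‖(A : ℂ) * d - (2 * A + c₁ + c₂)‖ := by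
        rw [norm_sub_rev]
        push_cast
        exact norm_sub_norm_le _ _

theorem norm_kernel_coeffs_dominate {A c₁ c₂ : ℝ} (hA : 0 < A) (hc₁ : 0 ≤ c₁) (hc₂ : 0 ≤ c₂)
    {d : ℂ} (hd0 : d ≠ 0) (hd1 : ‖d‖ < 1) :
    ‖(A : ℂ)‖ * ‖d‖ ^ 2 + ‖d ^ 2 * (c₁ + c₂ * d)‖
      < ‖d * (A * d - (2 * A + c₁ + c₂))‖ * ‖d‖ := by
  have h := mul_lt_mul_of_pos_right (norm_kernel_coeff_lt hA hc₁ hc₂ hd1)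
    (pow_pos (norm_pos_iff.mpr hd0) 2)
  rw [Complex.norm_real, Real.norm_of_nonneg hA.le, norm_mul, norm_mul, norm_pow]
  linarith

theorem kernel_coeff_zero_ne_zero {c₁ c₂ : ℝ} (hc₁ : 0 < c₁) (hc₂ : 0 ≤ c₂) (hc₂₁ : c₂ ≤ c₁)
    {d : ℂ} (hd0 : d ≠ 0) (hd1 : ‖d‖ < 1) : d ^ 2 * (c₁ + c₂ * d) ≠ 0 := by
  refine mul_ne_zero (pow_ne_zero 2 hd0) fun h => ?_
  have : c₁ = c₂ * ‖d‖ := by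
    simpa [Complex.norm_real, abs_of_pos hc₁, abs_of_nonneg hc₂] using
      congrArg norm (eq_neg_of_add_eq_zero_left h)
  nlinarith [norm_nonneg d]

/-- for 0 < |δ| < 1 the kernel quadratic in γ has exactly one root
(with multiplicity) with |γ| < |δ|, and that root is nonzero. -/
theorem stmt5 (a lam : ℝ) (ha : 0 < a) (ha1 : a < 1) (hl : 0 < lam) (hl1 : lam < 1)
    (d : ℂ) (hd0 : d ≠ 0) (hd1 : ‖d‖ < 1) :
    Multiset.card ((kernelQuadG a lam d).roots.filter
        (fun z => ‖z‖ < ‖d‖)) = 1 ∧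
    ∀ z ∈ (kernelQuadG a lam d).roots, ‖z‖ < ‖d‖ → z ≠ 0 := by
  set A : ℝ := (1 - lam) * (1 - a) * a
  set c₁ : ℝ := lam * (a ^ 2 + (1 - a) ^ 2)
  set c₂ : ℝ := lam * (1 - a) * a
  have hA : 0 < A := mul_pos (mul_pos (by linarith) (by linarith)) ha
  have hc₂ : 0 ≤ c₂ := (mul_pos (mul_pos hl (by linarith)) ha).le
  have hc₁ : 0 < c₁ := by positivity
  have hc₂₁ : c₂ ≤ c₁ := by nlinarith [sq_nonneg (2 * a - 1)]
  rw [kernelQuadG_eq rfl rfl rfl]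
  exact ⟨card_filter_roots_quadratic_norm_lt_eq_one (by exact_mod_cast hA.ne')
      (norm_kernel_coeffs_dominate hA hc₁.le hc₂ hd0 hd1),
    fun _ hz _ =>
      ne_zero_of_mem_roots_quadratic (kernel_coeff_zero_ne_zero hc₁ hc₂ hc₂₁ hd0 hd1) hz⟩
end

section
/- The quadratic equation λ(a²+ā²)·w² − (1 − (λ̄(ā²+a²) + λaā))·w + λ̄āa = 0 has two distinct roots w and ŵ with 0 < |w| < 1 < |ŵ|; in particular it has exactly one root in the open unit disk and the other root lies strictly outside the closed unit disk. -/
/-!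
Over the reals, `p(w) = A w² - B w + C` has `A > 0`, `p(0) = C = λ̄āa > 0` and
`p(1) = A - B + C = -aā < 0`. Hence `p` has a root `w ∈ (0, 1)`, and its partner `ŵ` (from
Vieta, `A w ŵ = C`) satisfies `A (1 - w) (1 - ŵ) = p(1) < 0`, so `ŵ > 1`.
-/

open Polynomial in
/-- The limiting quadratic λ(a²+ā²)w² − (1 − (λ̄(ā²+a²)+λaā))w + λ̄āa. -/
noncomputable def wQuad (a lam : ℝ) : Polynomial ℂ :=
  C ((lam:ℂ)*((a:ℂ)^2+(1-(a:ℂ))^2)) * X^2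
  - C (1 - ((1-(lam:ℂ))*((1-(a:ℂ))^2+(a:ℂ)^2) + (lam:ℂ)*(a:ℂ)*(1-(a:ℂ)))) * X
  + C ((1-(lam:ℂ))*(1-(a:ℂ))*(a:ℂ))

theorem exists_quadratic_roots_of_eval_one_neg {a b c : ℝ} (ha : 0 < a) (hc : 0 < c)
    (h1 : a - b + c < 0) :
    ∃ w w' : ℝ, 0 < w ∧ w < 1 ∧ 1 < w' ∧ b = a * (w + w') ∧ c = a * w * w' := by
  have hcont : ContinuousOn (fun x => a * x ^ 2 - b * x + c) (Set.Icc 0 1) := by fun_prop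
  obtain ⟨w, ⟨hw0, hw1⟩, hw⟩ :=
    intermediate_value_Ioo' zero_le_one hcont (show (0 : ℝ) ∈ _ by constructor <;> simpa)
  have hsum : b = a * (w + c / (a * w)) := by
    field_simp
    linarith
  have hprod : c = a * w * (c / (a * w)) := by field_simp
  have hneg : a * (1 - w) * (1 - c / (a * w)) < 0 := by
    rw [show a * (1 - w) * (1 - c / (a * w)) = a - b + c by rw [hsum]; nth_rw 3 [hprod]; ring]
    exact h1
  have hw' : 1 < c / (a * w) := by
    have : 0 < a * (1 - w) := mul_pos ha (by linarith)
    nlinarith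
  exact ⟨w, c / (a * w), hw0, hw1, hw', hsum, hprod⟩

/-- the quadratic has two distinct roots w, ŵ with
0 < |w| < 1 < |ŵ|; in particular exactly one root lies in the open unit disk
and the other lies strictly outside the closed unit disk. -/
theorem stmt10 (a lam : ℝ) (ha : 0 < a) (ha1 : a < 1) (hl : 0 < lam) (hl1 : lam < 1) :
    ∃ w what : ℂ, w ≠ what ∧
      (wQuad a lam).roots = {w, what} ∧
      0 < ‖w‖ ∧ ‖w‖ < 1 ∧ 1 < ‖what‖ ∧
      Multiset.card ((wQuad a lam).roots.filter (fun z => ‖z‖ < 1)) = 1 ∧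
      (∀ z ∈ (wQuad a lam).roots, ¬ ‖z‖ < 1 → 1 < ‖z‖) := by
  have ha' : 0 < 1 - a := by linarith
  have hl' : 0 < 1 - lam := by linarith
  have hA : lam * (a ^ 2 + (1 - a) ^ 2) ≠ 0 := by positivity
  obtain ⟨w, w', hw0, hw1, hw', hsum, hprod⟩ :=
    exists_quadratic_roots_of_eval_one_neg (a := lam * (a ^ 2 + (1 - a) ^ 2))
      (b := 1 - ((1 - lam) * ((1 - a) ^ 2 + a ^ 2) + lam * a * (1 - a)))
      (c := (1 - lam) * (1 - a) * a) (by positivity) (by positivity)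
      (by linarith [mul_pos ha ha'])
  have hroots : (wQuad a lam).roots = {(w : ℂ), (w' : ℂ)} := by
    rw [wQuad, sub_eq_add_neg, ← neg_mul, ← Polynomial.C_neg,
      Polynomial.roots_quadratic_eq_pair_iff_of_ne_zero (by exact_mod_cast hA), neg_mul, neg_inj]
    exact ⟨by exact_mod_cast hsum, by exact_mod_cast hprod⟩
  have hw_abs : |w| = w := abs_of_pos hw0
  have hw'_abs : |w'| = w' := abs_of_pos (by linarith)
  refine ⟨w, w', by exact_mod_cast (hw1.trans hw').ne, hroots, ?_, ?_, ?_, ?_, ?_⟩ <;>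
    simp [hroots, hw_abs, hw'_abs, hw0, hw1, hw', hw'.le]
end

section
/- For every r₂ ∈ ℂ with |r₂| = 1 and r₂ ≠ 1, the kernel quadratic Q_{r₂} has two roots δ₀(r₂) and δ₁(r₂) satisfying |δ₀(r₂)| < 1 < |δ₁(r₂)|. For r₂ = 1, the set of roots of Q₁ is {1, λ̄aā/(λ(ā²+a²)+λāa)}. -/
/-!
For `|r₂| = 1`, `r₂ ≠ 1`, write `Q_{r₂}(z) = A z² − B z + C`. The middle coefficient dominates on
the unit circle, `‖A‖ + ‖C‖ < ‖B‖`, since `Re B` exceeds `‖A‖ + ‖C‖` by at least `λ̄āa (1 − Re r₂) > 0`.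
If `d₀, d₁` are the roots then `B = A (d₀ + d₁)` and `C = A d₀ d₁`, so
`1 + ‖d₀ d₁‖ < ‖d₀ + d₁‖ ≤ ‖d₀‖ + ‖d₁‖`, i.e. `(‖d₀‖ − 1)(‖d₁‖ − 1) < 0`: exactly one root lies
inside the unit disc. For `r₂ = 1` the coefficients satisfy `A − B + C = 0`, so `1` is a root and
the other root is `C / A`.
-/

/-- The kernel quadratic in r₁ (for a fixed nonzero r₂):
Q_{r₂}(r₁) = (λ(ā²+a²)+λāa/r₂)r₁² − (λ(ā²+a²)+aā+λ̄āa(1−1/r₂))r₁ + λ̄aā. -/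
noncomputable def Qker (a lam : ℝ) (r2 r1 : ℂ) : ℂ :=
  ((lam:ℂ)*((1-(a:ℂ))^2+(a:ℂ)^2) + (lam:ℂ)*(1-(a:ℂ))*(a:ℂ)/r2) * r1^2
  - ((lam:ℂ)*((1-(a:ℂ))^2+(a:ℂ)^2) + (a:ℂ)*(1-(a:ℂ))
      + (1-(lam:ℂ))*(1-(a:ℂ))*(a:ℂ)*(1 - 1/r2)) * r1
  + (1-(lam:ℂ))*(a:ℂ)*(1-(a:ℂ))

section Quadratic

variable {K : Type*}

theorem quadratic_eq_zero_iff_of_vieta [Field K] {A B C d₀ d₁ : K} (hA : A ≠ 0)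
    (hB : B = A * (d₀ + d₁)) (hC : C = A * (d₀ * d₁)) (z : K) :
    A * z ^ 2 - B * z + C = 0 ↔ z = d₀ ∨ z = d₁ := by
  have hfactor : A * z ^ 2 - B * z + C = A * ((z - d₀) * (z - d₁)) := by
    rw [hB, hC]; ring
  simp only [hfactor, mul_eq_zero, hA, false_or, sub_eq_zero]

theorem exists_vieta_roots [Field K] [IsAlgClosed K] {A : K} (hA : A ≠ 0) (B C : K) :
    ∃ d₀ d₁ : K, B = A * (d₀ + d₁) ∧ C = A * (d₀ * d₁) := by
  obtain ⟨d₀, hd₀⟩ := IsAlgClosed.exists_root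
    (Polynomial.C A * .X ^ 2 + .C (-B) * .X + .C C) (by rw [Polynomial.degree_quadratic hA]; decide)
  simp only [Polynomial.IsRoot, Polynomial.eval_add, Polynomial.eval_mul, Polynomial.eval_C,
    Polynomial.eval_pow, Polynomial.eval_X] at hd₀
  have hAB : A * (B / A) = B := mul_div_cancel₀ B hA
  exact ⟨d₀, B / A - d₀, by rw [add_sub_cancel, hAB], by linear_combination hd₀ - d₀ * hAB⟩

theorem norm_sub_one_mul_norm_sub_one_neg [SeminormedRing K] [NormMulClass K] {x y : K}
    (h : 1 + ‖x * y‖ < ‖x + y‖) : (‖x‖ - 1) * (‖y‖ - 1) < 0 := by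
  rw [norm_mul] at h
  nlinarith [norm_add_le x y]

theorem exists_roots_norm_lt_one_lt_norm [NormedField K] [IsAlgClosed K] {A B C : K}
    (hA : A ≠ 0) (hdom : ‖A‖ + ‖C‖ < ‖B‖) :
    ∃ d₀ d₁ : K, ‖d₀‖ < 1 ∧ 1 < ‖d₁‖ ∧ ∀ z, A * z ^ 2 - B * z + C = 0 ↔ z = d₀ ∨ z = d₁ := by
  obtain ⟨d₀, d₁, hB, hC⟩ := exists_vieta_roots hA B C
  have hsum : 1 + ‖d₀ * d₁‖ < ‖d₀ + d₁‖ := by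
    rw [hB, hC, norm_mul A, norm_mul A, ← mul_one_add] at hdom
    exact lt_of_mul_lt_mul_left (by linarith) (norm_nonneg A)
  rcases mul_neg_iff.mp (norm_sub_one_mul_norm_sub_one_neg hsum) with ⟨h₀, h₁⟩ | ⟨h₀, h₁⟩
  · refine ⟨d₁, d₀, by linarith, by linarith, fun z => ?_⟩
    rw [quadratic_eq_zero_iff_of_vieta hA hB hC, or_comm]
  · exact ⟨d₀, d₁, by linarith, by linarith, quadratic_eq_zero_iff_of_vieta hA hB hC⟩

end Quadratic

namespace Complex

theorem re_lt_one_of_norm_eq_one {w : ℂ} (hw : ‖w‖ = 1) (hne : w ≠ 1) : w.re < 1 := by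
  refine (hw ▸ re_le_norm w).lt_of_ne fun hre => hne ?_
  have him : w.im = 0 := abs_re_eq_norm.mp (by rw [hre, hw, abs_one])
  exact ext hre him

theorem inv_re_of_norm_eq_one {w : ℂ} (hw : ‖w‖ = 1) : w⁻¹.re = w.re := by
  rw [inv_re, normSq_eq_norm_sq, hw, one_pow, div_one]

end Complex

section Kernel

variable {p q c : ℝ} {w : ℂ}

theorem ofReal_add_div_ne_zero (hqp : |q| < p) (hw : ‖w‖ = 1) : (p : ℂ) + q / w ≠ 0 := by
  intro h
  have hnorm : ‖(q : ℂ) / w‖ = ‖(p : ℂ)‖ := by rw [eq_neg_of_add_eq_zero_right h, norm_neg]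
  rw [norm_div, hw, div_one, Complex.norm_real, Complex.norm_real, Real.norm_eq_abs,
    Real.norm_eq_abs] at hnorm
  linarith [le_abs_self p]

theorem norm_add_norm_lt_norm_middle_coeff (hp : 0 ≤ p) (hq : 0 ≤ q) (hc : 0 < c) (hw : ‖w‖ = 1)
    (hne : w ≠ 1) :
    ‖(p : ℂ) + q / w‖ + ‖(c : ℂ)‖ < ‖(p : ℂ) + q + c + c * (1 - 1 / w)‖ := by
  have hA : ‖(p : ℂ) + q / w‖ ≤ p + q := by
    calc ‖(p : ℂ) + q / w‖ ≤ ‖(p : ℂ)‖ + ‖(q : ℂ) / w‖ := norm_add_le _ _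
      _ = p + q := by
        rw [norm_div, hw, div_one, Complex.norm_of_nonneg hp, Complex.norm_of_nonneg hq]
  have hBre : ((p : ℂ) + q + c + c * (1 - 1 / w)).re = p + q + c + c * (1 - w.re) := by
    simp [Complex.inv_re_of_norm_eq_one hw]
  have hgap : 0 < c * (1 - w.re) :=
    mul_pos hc (sub_pos.mpr (Complex.re_lt_one_of_norm_eq_one hw hne))
  have hB := Complex.re_le_norm ((p : ℂ) + q + c + c * (1 - 1 / w))
  rw [Complex.norm_of_nonneg hc.le]
  linarith

end Kernel

theorem Qker_eq (a lam : ℝ) (r2 z : ℂ) :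
    Qker a lam r2 z =
      ((lam * ((1 - a) ^ 2 + a ^ 2) : ℝ) + (lam * (1 - a) * a : ℝ) / r2) * z ^ 2
      - ((lam * ((1 - a) ^ 2 + a ^ 2) : ℝ) + (lam * (1 - a) * a : ℝ) + ((1 - lam) * a * (1 - a) : ℝ)
          + ((1 - lam) * a * (1 - a) : ℝ) * (1 - 1 / r2)) * z
      + ((1 - lam) * a * (1 - a) : ℝ) := by
  simp only [Qker]
  push_cast
  ring

theorem setOf_Qker_one_eq (a lam : ℝ)
    (hA : ((lam * ((1 - a) ^ 2 + a ^ 2) : ℝ) + (lam * (1 - a) * a : ℝ) : ℂ) ≠ 0) :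
    {z : ℂ | Qker a lam 1 z = 0} =
      {1, ((1-(lam:ℂ))*(a:ℂ)*(1-(a:ℂ))) /
        ((lam:ℂ)*((1-(a:ℂ))^2+(a:ℂ)^2) + (lam:ℂ)*(1-(a:ℂ))*(a:ℂ))} := by
  have hd₁ : (((1 - lam) * a * (1 - a) : ℝ) : ℂ) / ((lam * ((1 - a) ^ 2 + a ^ 2) : ℝ) +
      (lam * (1 - a) * a : ℝ)) = (1 - (lam:ℂ)) * a * (1 - a) /
      ((lam:ℂ) * ((1 - (a:ℂ)) ^ 2 + (a:ℂ) ^ 2) + (lam:ℂ) * (1 - (a:ℂ)) * (a:ℂ)) := by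
    push_cast; rfl
  ext z
  simp only [Set.mem_ofPred_eq, Set.mem_insert_iff, Set.mem_singleton_iff, Qker_eq, div_one,
    sub_self, mul_zero, add_zero, ← hd₁]
  exact quadratic_eq_zero_iff_of_vieta hA (by rw [mul_one_add, mul_div_cancel₀ _ hA])
    (by rw [one_mul, mul_div_cancel₀ _ hA]) z

/-- for |r₂| = 1, r₂ ≠ 1, the kernel quadratic Q_{r₂} has two
roots δ₀, δ₁ with |δ₀| < 1 < |δ₁|; for r₂ = 1 its root set is
{1, λ̄aā/(λ(ā²+a²)+λāa)}. -/
theorem stmt14 (a lam : ℝ) (ha : 0 < a) (ha1 : a < 1) (hl : 0 < lam) (hl1 : lam < 1) :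
    (∀ r2 : ℂ, ‖r2‖ = 1 → r2 ≠ 1 →
      ∃ d0 d1 : ℂ, ‖d0‖ < 1 ∧ 1 < ‖d1‖ ∧
        ∀ z : ℂ, Qker a lam r2 z = 0 ↔ (z = d0 ∨ z = d1)) ∧
    ({z : ℂ | Qker a lam 1 z = 0} =
      {1, ((1-(lam:ℂ))*(a:ℂ)*(1-(a:ℂ))) /
        ((lam:ℂ)*((1-(a:ℂ))^2+(a:ℂ)^2) + (lam:ℂ)*(1-(a:ℂ))*(a:ℂ))}) := by
  have ha' := sub_pos.mpr ha1
  have hq : 0 < lam * (1 - a) * a := by positivity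
  have hqp : |lam * (1 - a) * a| < lam * ((1 - a) ^ 2 + a ^ 2) := by
    rw [abs_of_pos hq]; nlinarith [mul_pos hl (mul_pos ha ha'), sq_nonneg (1 - 2 * a)]
  have hc : 0 < (1 - lam) * a * (1 - a) := by have := sub_pos.mpr hl1; positivity
  have hA : ((lam * ((1 - a) ^ 2 + a ^ 2) : ℝ) + (lam * (1 - a) * a : ℝ) : ℂ) ≠ 0 := by
    exact_mod_cast (by positivity : (0:ℝ) < lam * ((1 - a) ^ 2 + a ^ 2) + lam * (1 - a) * a).ne'
  refine ⟨fun r2 hr2 hne => ?_, setOf_Qker_one_eq a lam hA⟩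
  simp only [Qker_eq]
  exact exists_roots_norm_lt_one_lt_norm (ofReal_add_div_ne_zero hqp hr2)
    (norm_add_norm_lt_norm_middle_coeff (by positivity) hq.le hc hr2 hne)
end

section
/- Assume ρ < 1 and let w be a stationary distribution of the original chain. Then for all x, y ∈ ℂ with 0 < |x| ≤ 1 and 0 < |y| ≤ 1: T(x,y)·Σ_{i<j} w_{i,j} x^i y^j + T(y,x)·Σ_{i>j} w_{i,j} x^i y^j + F(x,y)·Σ_{i≥0} w_{i,i} (xy)^i + C(x,y)·Σ_{i≥0} w_{i,0} x^i + C(y,x)·Σ_{j≥0} w_{0,j} y^j = w_{0,0}·L(x,y). -/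
/-- The load ρ = λ(ā²+a²)/(2λ̄āa). -/
noncomputable def rhoLoad (a lam : ℝ) : ℝ :=
  lam * ((1-a)^2 + a^2) / (2 * (1-lam) * (1-a) * a)

/-- A stationary distribution of the original chain. -/
def IsStationaryO (a lam : ℝ) (w : ℕ → ℕ → ℝ) : Prop :=
  (∀ i j, 0 ≤ w i j) ∧ Summable (fun p : ℕ × ℕ => w p.1 p.2) ∧
  (∑' p : ℕ × ℕ, w p.1 p.2) = 1 ∧
  ∀ p : ℕ × ℕ, w p.1 p.2 = ∑' q : ℕ × ℕ, w q.1 q.2 * Pker a lam q p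

/-- T(x,y) = λ(ā²+a²)(1−x) + λ̄āa(2−1/x−1/y) + λāa(1−x/y). -/
noncomputable def Tfun (a lam : ℝ) (x y : ℂ) : ℂ :=
  (lam:ℂ)*((1-(a:ℂ))^2+(a:ℂ)^2)*(1-x)
  + (1-(lam:ℂ))*(1-(a:ℂ))*(a:ℂ)*(2 - 1/x - 1/y)
  + (lam:ℂ)*(1-(a:ℂ))*(a:ℂ)*(1 - x/y)

/-- F(x,y) = (λ/2)(2−x−y)(ā²+a²) + λ̄āa(2−1/x−1/y) + (λ/2)āa(2−y/x−x/y). -/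
noncomputable def Ffun (a lam : ℝ) (x y : ℂ) : ℂ :=
  (lam:ℂ)/2*(2-x-y)*((1-(a:ℂ))^2+(a:ℂ)^2)
  + (1-(lam:ℂ))*(1-(a:ℂ))*(a:ℂ)*(2 - 1/x - 1/y)
  + (lam:ℂ)/2*(1-(a:ℂ))*(a:ℂ)*(2 - y/x - x/y)

/-- C(x,y) = λ̄a[a(1−1/x) − ā(1−1/y)]. -/
noncomputable def Cfun (a lam : ℝ) (x y : ℂ) : ℂ :=
  (1-(lam:ℂ))*(a:ℂ)*((a:ℂ)*(1 - 1/x) - (1-(a:ℂ))*(1 - 1/y))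

/-- L(x,y) = (λ/2)a(a−ā)(2−x−y) + λ̄a²(2−1/x−1/y) + (λ/2)aā(2−x/y−y/x). -/
noncomputable def Lfun (a lam : ℝ) (x y : ℂ) : ℂ :=
  (lam:ℂ)/2*(a:ℂ)*((a:ℂ)-(1-(a:ℂ)))*(2-x-y)
  + (1-(lam:ℂ))*(a:ℂ)^2*(2 - 1/x - 1/y)
  + (lam:ℂ)/2*(a:ℂ)*(1-(a:ℂ))*(2 - x/y - y/x)

/-!
Multiply the balance equations `w p = ∑ q, w q * P(q, p)` by `x ^ p.1 * y ^ p.2` and sum over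
`p`. For `‖x‖, ‖y‖ ≤ 1` the double series converges absolutely, so the order of summation may be
exchanged, and `∑ q, w q * (x ^ q.1 * y ^ q.2 - ∑ p, P(q, p) * x ^ p.1 * y ^ p.2) = 0`.
Since the chain only makes nearest-neighbour moves, the bracket is an explicit Laurent polynomial:
`K(q) * x ^ q.1 * y ^ q.2`, plus `-L(x, y)` at the origin, where `K(q)` is `T(x,y)`, `T(y,x)` or
`F(x,y)` according as `q` lies above, below or on the diagonal, plus `C(x,y)` on the row `j = 0`
and `C(y,x)` on the column `i = 0`. Regrouping by these regions gives the equation.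
-/

theorem hasSum_smul_tsum_smul_of_stationary {α E : Type*} [NormedAddCommGroup E]
    [NormedSpace ℝ E] [CompleteSpace E] {P : α → α → ℝ} (hP : ∀ q p, 0 ≤ P q p)
    (hrow : ∀ q, HasSum (P q) 1) {w : α → ℝ} (hw : Summable w)
    (hstat : ∀ p, w p = ∑' q, w q * P q p) {g : α → E} {C : ℝ} (hg : ∀ p, ‖g p‖ ≤ C) :
    HasSum (fun q => w q • ∑' p, P q p • g p) (∑' p, w p • g p) := by
  have habs : Summable fun qp : α × α => |w qp.1| * P qp.1 qp.2 := by
    rw [summable_prod_of_nonneg fun qp => mul_nonneg (abs_nonneg _) (hP _ _)]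
    refine ⟨fun q => (hrow q).summable.mul_left |w q|, ?_⟩
    simpa only [tsum_mul_left, (hrow _).tsum_eq, mul_one] using hw.abs
  have hwP : Summable fun qp : α × α => w qp.1 * P qp.1 qp.2 :=
    habs.of_norm_bounded fun qp => by
      rw [Real.norm_eq_abs, abs_mul, abs_of_nonneg (hP _ _)]
  set F : α × α → E := fun qp => (w qp.1 * P qp.1 qp.2) • g qp.2
  have hF : Summable F := by
    refine (habs.mul_right C).of_norm_bounded fun qp => ?_
    rw [norm_smul, Real.norm_eq_abs, abs_mul, abs_of_nonneg (hP _ _)]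
    exact mul_le_mul_of_nonneg_left (hg _) (mul_nonneg (abs_nonneg _) (hP _ _))
  have hfiber : ∀ q, HasSum (fun p => F (q, p)) (w q • ∑' p, P q p • g p) := fun q => by
    simpa only [F, mul_smul, tsum_const_smul''] using (hF.prod_factor q).hasSum
  have htotal : ∑' qp, F qp = ∑' p, w p • g p := by
    rw [hF.tsum_prod, ← (hF : Summable (Function.uncurry fun q p => F (q, p))).tsum_comm]
    refine tsum_congr fun p => ?_
    have hcol : Summable fun q => w q * P q p := hwP.prod_symm.prod_factor p
    rw [hstat p]
    exact hcol.tsum_smul_const (g p)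
  exact htotal ▸ hF.hasSum.prod_fiberwise hfiber

/-- `transOp a lam g q = ∑ p, Pker a lam q p • g p`, read off row by row from `Pker`. -/
noncomputable def transOp (a lam : ℝ) {E : Type*} [AddCommMonoid E] [Module ℝ E]
    (g : ℕ × ℕ → E) : ℕ × ℕ → E := fun s =>
  let i := s.1; let j := s.2
  if j < i ∧ 0 < j then
    (lam*((1-a)^2+a^2)) • g (i, j+1)
    + ((1-lam)*a*(1-a)) • g (i, j-1)
    + ((1-lam)*a*(1-a)) • g (i-1, j)
    + (lam*a*(1-a)) • g (i-1, j+1)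
    + ((1-lam)*((1-a)^2+a^2) + lam*a*(1-a)) • g (i, j)
  else if i < j ∧ 0 < i then
    (lam*((1-a)^2+a^2)) • g (i+1, j)
    + ((1-lam)*a*(1-a)) • g (i, j-1)
    + ((1-lam)*a*(1-a)) • g (i-1, j)
    + (lam*a*(1-a)) • g (i+1, j-1)
    + ((1-lam)*((1-a)^2+a^2) + lam*a*(1-a)) • g (i, j)
  else if 0 < i ∧ j = 0 then
    (lam*((1-a)^2+a^2)) • g (i, 1)
    + ((1-lam)*a) • g (i-1, 0)
    + (lam*a*(1-a)) • g (i-1, 1)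
    + ((1-lam)*(1-a) + lam*a*(1-a)) • g (i, 0)
  else if 0 < j ∧ i = 0 then
    (lam*((1-a)^2+a^2)) • g (1, j)
    + ((1-lam)*a) • g (0, j-1)
    + (lam*a*(1-a)) • g (1, j-1)
    + ((1-lam)*(1-a) + lam*a*(1-a)) • g (0, j)
  else if 0 < i then
    (lam/2*((1-a)^2+a^2)) • g (i+1, i)
    + (lam/2*((1-a)^2+a^2)) • g (i, i+1)
    + ((1-lam)*(1-a)*a) • g (i-1, i)
    + ((1-lam)*(1-a)*a) • g (i, i-1)
    + (lam/2*(1-a)*a) • g (i+1, i-1)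
    + (lam/2*(1-a)*a) • g (i-1, i+1)
    + ((1-lam)*((1-a)^2+a^2) + lam*a*(1-a)) • g (i, i)
  else
    (lam/2*(1-a)) • g (1, 0)
    + (lam/2*(1-a)) • g (0, 1)
    + ((1-lam) + lam*a) • g (0, 0)

section

variable {E : Type*} [AddCommMonoid E] [Module ℝ E] [TopologicalSpace E]

theorem hasSum_ite_eq_smul {α : Type*} [DecidableEq α] (g : α → E) (t : α) (c : ℝ) :
    HasSum (fun p => (if p = t then c else 0) • g p) (c • g t) := by
  convert hasSum_ite_eq t (c • g t) using 2 with p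
  split_ifs with h <;> simp [h]

variable [ContinuousAdd E]

theorem HasSum.add_ite_eq_smul {α : Type*} [DecidableEq α] {g : α → E} {f : α → ℝ} {s : E}
    (hf : HasSum (fun p => f p • g p) s) (t : α) (c : ℝ) :
    HasSum (fun p => (f p + if p = t then c else 0) • g p) (s + c • g t) := by
  simpa only [add_smul] using hf.add (hasSum_ite_eq_smul g t c)

theorem hasSum_Pker_smul (a lam : ℝ) (g : ℕ × ℕ → E) (q : ℕ × ℕ) :
    HasSum (fun p => Pker a lam q p • g p) (transOp a lam g q) := by
  unfold Pker transOp
  dsimp only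
  -- Each row of `Pker` is a left-nested sum of point masses `if p = t then c else 0`.
  split_ifs <;>
    repeat (first
      | with_reducible exact hasSum_ite_eq_smul g _ _
      | refine HasSum.add_ite_eq_smul ?_ _ _)

end

theorem hasSum_Pker (a lam : ℝ) (q : ℕ × ℕ) : HasSum (Pker a lam q) 1 := by
  have h := hasSum_Pker_smul a lam (fun _ => (1 : ℝ)) q
  simp only [smul_eq_mul, mul_one] at h
  convert h using 1
  unfold transOp
  dsimp only
  split_ifs <;> ring

theorem Pker_nonneg {a lam : ℝ} (ha : 0 ≤ a) (ha1 : a ≤ 1) (hl : 0 ≤ lam) (hl1 : lam ≤ 1)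
    (q p : ℕ × ℕ) : 0 ≤ Pker a lam q p := by
  have ha' : 0 ≤ 1 - a := by linarith
  have hl' : 0 ≤ 1 - lam := by linarith
  unfold Pker
  dsimp only
  repeat' (first
    | apply ite_nonneg
    | with_reducible apply add_nonneg
    | exact sq_nonneg _
    | with_reducible apply mul_nonneg
    | with_reducible apply div_nonneg)
  all_goals first | assumption | norm_num

/-- The coefficient of `w q.1 q.2 * x ^ q.1 * y ^ q.2` on the left-hand side of the functional
equation. -/
noncomputable def funEqCoeff (a lam : ℝ) (x y : ℂ) (q : ℕ × ℕ) : ℂ :=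
  (if q.1 < q.2 then Tfun a lam x y else 0) + (if q.2 < q.1 then Tfun a lam y x else 0)
    + (if q.1 = q.2 then Ffun a lam x y else 0) + (if q.2 = 0 then Cfun a lam x y else 0)
    + (if q.1 = 0 then Cfun a lam y x else 0)

theorem transOp_monomial (a lam : ℝ) {x y : ℂ} (hx : x ≠ 0) (hy : y ≠ 0) (q : ℕ × ℕ) :
    transOp a lam (fun p => x ^ p.1 * y ^ p.2) q
      = (1 - funEqCoeff a lam x y q) * (x ^ q.1 * y ^ q.2)
        + if q = (0, 0) then Lfun a lam x y else 0 := by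
  obtain ⟨_ | i, _ | j⟩ := q <;>
    simp only [transOp, funEqCoeff, Prod.mk.injEq, Complex.real_smul, Nat.add_sub_cancel,
      add_lt_add_iff_right, add_left_inj, Nat.zero_lt_succ, Nat.not_lt_zero, lt_self_iff_false,
      Nat.add_one_ne_zero, and_true, and_false] <;>
    split_ifs <;>
    first
      | contradiction
      | omega
      | (subst_vars; simp only [Tfun, Ffun, Cfun, Lfun]; push_cast; field_simp; ring)

theorem hasSum_ite_mul {α R : Type*} [NormedRing R] [CompleteSpace R] {f : α → R}
    (hf : Summable f) (P : α → Prop) [DecidablePred P] (c : R) :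
    HasSum (fun q => if P q then c * f q else 0) (c * ∑' q, if P q then f q else 0) := by
  have h : Summable fun q => if P q then f q else 0 :=
    (hf.indicator {q | P q}).congr fun q => by simp [Set.indicator_apply]
  simpa only [mul_ite, mul_zero] using h.hasSum.mul_left c

theorem tsum_ite_eq_tsum_comp {α β M : Type*} [AddCommMonoid M] [TopologicalSpace M]
    {e : β → α} (he : e.Injective) {P : α → Prop} [DecidablePred P]
    (hP : ∀ q, P q ↔ q ∈ Set.range e) (f : α → M) :
    ∑' q, (if P q then f q else 0) = ∑' b, f (e b) := by
  rw [← he.tsum_eq fun q hq => (hP q).1 <| by_contra fun h => hq (if_neg h)]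
  exact tsum_congr fun b => if_pos ((hP _).2 ⟨b, rfl⟩)

theorem hasSum_funEqCoeff_mul (a lam : ℝ) (x y : ℂ) {w : ℕ → ℕ → ℝ}
    (hw : Summable fun q : ℕ × ℕ => ((w q.1 q.2 : ℝ) : ℂ) * x ^ q.1 * y ^ q.2) :
    HasSum (fun q => funEqCoeff a lam x y q * (((w q.1 q.2 : ℝ) : ℂ) * x ^ q.1 * y ^ q.2))
      (Tfun a lam x y * (∑' p : ℕ × ℕ,
          if p.1 < p.2 then ((w p.1 p.2 : ℝ) : ℂ) * x^p.1 * y^p.2 else 0)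
      + Tfun a lam y x * (∑' p : ℕ × ℕ,
          if p.2 < p.1 then ((w p.1 p.2 : ℝ) : ℂ) * x^p.1 * y^p.2 else 0)
      + Ffun a lam x y * (∑' i : ℕ, ((w i i : ℝ) : ℂ) * (x*y)^i)
      + Cfun a lam x y * (∑' i : ℕ, ((w i 0 : ℝ) : ℂ) * x^i)
      + Cfun a lam y x * (∑' j : ℕ, ((w 0 j : ℝ) : ℂ) * y^j)) := by
  have hdiag : (∑' i : ℕ, ((w i i : ℝ) : ℂ) * (x*y)^i)
      = ∑' p : ℕ × ℕ, if p.1 = p.2 then ((w p.1 p.2 : ℝ) : ℂ) * x^p.1 * y^p.2 else 0 := by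
    rw [tsum_ite_eq_tsum_comp (e := fun i => (i, i)) (fun i j h => congrArg Prod.fst h)
      fun q => ⟨fun h => ⟨q.1, Prod.ext rfl h⟩, by rintro ⟨i, rfl⟩; rfl⟩]
    simp only [mul_pow, mul_assoc]
  have hrow : (∑' i : ℕ, ((w i 0 : ℝ) : ℂ) * x^i)
      = ∑' p : ℕ × ℕ, if p.2 = 0 then ((w p.1 p.2 : ℝ) : ℂ) * x^p.1 * y^p.2 else 0 := by
    rw [tsum_ite_eq_tsum_comp (e := fun i => (i, 0)) (fun i j h => congrArg Prod.fst h)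
      fun q => ⟨fun h => ⟨q.1, Prod.ext rfl h.symm⟩, by rintro ⟨i, rfl⟩; rfl⟩]
    simp only [pow_zero, mul_one]
  have hcol : (∑' j : ℕ, ((w 0 j : ℝ) : ℂ) * y^j)
      = ∑' p : ℕ × ℕ, if p.1 = 0 then ((w p.1 p.2 : ℝ) : ℂ) * x^p.1 * y^p.2 else 0 := by
    rw [tsum_ite_eq_tsum_comp (e := fun j => (0, j)) (fun i j h => congrArg Prod.snd h)
      fun q => ⟨fun h => ⟨q.2, Prod.ext h.symm rfl⟩, by rintro ⟨j, rfl⟩; rfl⟩]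
    simp only [pow_zero, mul_one]
  rw [hdiag, hrow, hcol]
  refine (((((hasSum_ite_mul hw _ (Tfun a lam x y)).add (hasSum_ite_mul hw _ (Tfun a lam y x))).add
    (hasSum_ite_mul hw _ (Ffun a lam x y))).add (hasSum_ite_mul hw _ (Cfun a lam x y))).add
    (hasSum_ite_mul hw _ (Cfun a lam y x))).congr_fun fun q => ?_
  simp only [funEqCoeff, add_mul, ite_mul, zero_mul]

theorem norm_monomial_le_one {x y : ℂ} (hx : ‖x‖ ≤ 1) (hy : ‖y‖ ≤ 1) (p : ℕ × ℕ) :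
    ‖x ^ p.1 * y ^ p.2‖ ≤ 1 := by
  rw [norm_mul, norm_pow, norm_pow]
  exact mul_le_one₀ (pow_le_one₀ (norm_nonneg _) hx) (by positivity)
    (pow_le_one₀ (norm_nonneg _) hy)

theorem summable_ofReal_mul_monomial {w : ℕ × ℕ → ℝ} (hw : Summable w) {x y : ℂ}
    (hx : ‖x‖ ≤ 1) (hy : ‖y‖ ≤ 1) :
    Summable fun p : ℕ × ℕ => (w p : ℂ) * x ^ p.1 * y ^ p.2 :=
  hw.abs.of_norm_bounded fun p => by
    rw [mul_assoc, norm_mul, Complex.norm_real, Real.norm_eq_abs]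
    exact mul_le_of_le_one_right (abs_nonneg _) (norm_monomial_le_one hx hy p)

theorem hasSum_funEqCoeff_mul_of_stationary {a lam : ℝ} (ha : 0 ≤ a) (ha1 : a ≤ 1)
    (hl : 0 ≤ lam) (hl1 : lam ≤ 1) {w : ℕ → ℕ → ℝ} (hw : Summable fun p : ℕ × ℕ => w p.1 p.2)
    (hstat : ∀ p : ℕ × ℕ, w p.1 p.2 = ∑' q : ℕ × ℕ, w q.1 q.2 * Pker a lam q p)
    {x y : ℂ} (hx0 : x ≠ 0) (hy0 : y ≠ 0) (hx : ‖x‖ ≤ 1) (hy : ‖y‖ ≤ 1) :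
    HasSum (fun q => funEqCoeff a lam x y q * (((w q.1 q.2 : ℝ) : ℂ) * x ^ q.1 * y ^ q.2))
      (((w 0 0 : ℝ) : ℂ) * Lfun a lam x y) := by
  have hbalance := hasSum_smul_tsum_smul_of_stationary (w := fun p => w p.1 p.2)
    (Pker_nonneg ha ha1 hl hl1) (hasSum_Pker a lam) hw hstat (norm_monomial_le_one hx hy)
  have hrow : ∀ q, ∑' p : ℕ × ℕ, Pker a lam q p • (x ^ p.1 * y ^ p.2)
      = transOp a lam (fun p => x ^ p.1 * y ^ p.2) q :=
    fun q => (hasSum_Pker_smul a lam _ q).tsum_eq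
  simp only [hrow, transOp_monomial a lam hx0 hy0] at hbalance
  have hwm : HasSum (fun p : ℕ × ℕ => w p.1 p.2 • (x ^ p.1 * y ^ p.2))
      (∑' p : ℕ × ℕ, w p.1 p.2 • (x ^ p.1 * y ^ p.2)) := by
    simpa only [Complex.real_smul, mul_assoc] using
      (summable_ofReal_mul_monomial hw hx hy).hasSum
  have horigin : HasSum (fun q : ℕ × ℕ => w q.1 q.2 • if q = (0, 0) then Lfun a lam x y else 0)
      (w 0 0 • Lfun a lam x y) := by
    refine (hasSum_ite_eq ((0, 0) : ℕ × ℕ) (w 0 0 • Lfun a lam x y)).congr_fun fun q => ?_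
    by_cases h : q = (0, 0)
    · simp only [h, if_true]
    · simp only [h, if_false, smul_zero]
  have h := (hwm.sub hbalance).add horigin
  rw [sub_self, zero_add, Complex.real_smul] at h
  refine h.congr_fun fun q => ?_
  simp only [Complex.real_smul]
  ring

theorem stmt17_general (a lam : ℝ) (ha : 0 < a) (ha1 : a < 1) (hl : 0 < lam) (hl1 : lam < 1)
    (w : ℕ → ℕ → ℝ) (hw : IsStationaryO a lam w) :
    ∀ x y : ℂ, 0 < ‖x‖ → ‖x‖ ≤ 1 →
      0 < ‖y‖ → ‖y‖ ≤ 1 →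
      Tfun a lam x y * (∑' p : ℕ × ℕ,
          if p.1 < p.2 then ((w p.1 p.2 : ℝ) : ℂ) * x^p.1 * y^p.2 else 0)
      + Tfun a lam y x * (∑' p : ℕ × ℕ,
          if p.2 < p.1 then ((w p.1 p.2 : ℝ) : ℂ) * x^p.1 * y^p.2 else 0)
      + Ffun a lam x y * (∑' i : ℕ, ((w i i : ℝ) : ℂ) * (x*y)^i)
      + Cfun a lam x y * (∑' i : ℕ, ((w i 0 : ℝ) : ℂ) * x^i)
      + Cfun a lam y x * (∑' j : ℕ, ((w 0 j : ℝ) : ℂ) * y^j)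
      = ((w 0 0 : ℝ) : ℂ) * Lfun a lam x y := by
  obtain ⟨-, hsum, -, hstat⟩ := hw
  intro x y hx0 hx1 hy0 hy1
  exact (hasSum_funEqCoeff_mul a lam x y (summable_ofReal_mul_monomial hsum hx1 hy1)).unique
    (hasSum_funEqCoeff_mul_of_stationary ha.le ha1.le hl.le hl1.le hsum hstat
      (norm_pos_iff.mp hx0) (norm_pos_iff.mp hy0) hx1 hy1)

/-- the functional equation satisfied by the generating functions
of a stationary distribution w of the original chain. -/
theorem stmt17 (a lam : ℝ) (ha : 0 < a) (ha1 : a < 1) (hl : 0 < lam) (hl1 : lam < 1)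
    (hρ : rhoLoad a lam < 1)
    (w : ℕ → ℕ → ℝ) (hw : IsStationaryO a lam w) :
    ∀ x y : ℂ, 0 < ‖x‖ → ‖x‖ ≤ 1 →
      0 < ‖y‖ → ‖y‖ ≤ 1 →
      Tfun a lam x y * (∑' p : ℕ × ℕ,
          if p.1 < p.2 then ((w p.1 p.2 : ℝ) : ℂ) * x^p.1 * y^p.2 else 0)
      + Tfun a lam y x * (∑' p : ℕ × ℕ,
          if p.2 < p.1 then ((w p.1 p.2 : ℝ) : ℂ) * x^p.1 * y^p.2 else 0)
      + Ffun a lam x y * (∑' i : ℕ, ((w i i : ℝ) : ℂ) * (x*y)^i)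
      + Cfun a lam x y * (∑' i : ℕ, ((w i 0 : ℝ) : ℂ) * x^i)
      + Cfun a lam y x * (∑' j : ℕ, ((w 0 j : ℝ) : ℂ) * y^j)
      = ((w 0 0 : ℝ) : ℂ) * Lfun a lam x y :=
  stmt17_general a lam ha ha1 hl hl1 w hw
end
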